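/- Let J be a lsc proper convex function, A ∈ ℝ^{m×n}, b₀ = Ax₀. Suppose x₀ is a sharp solution of min{J(x) : Ax = b₀}: equivalently, there exists α > 0 with ‖Ah‖ ≥ α‖h‖ for all h ∈ cl D_J(x₀). Then for any δ > 0 and any b with ‖Ax₀ - b‖ ≤ δ, every minimizer x^δ of J over {x : ‖Ax - b‖ ≤ δ} satisfies ‖x^δ - x₀‖ ≤ 2δ/α. -/

import Mathlib

/-!
Since `x₀` is feasible for the noisy problem, optimality of `x^δ` gives `J x^δ ≤ J x₀`, so
`x^δ - x₀` lies in the descent cone of `J` at `x₀`. Both `x^δ` and `x₀` are within `δ` of `b`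
under `A`, so `‖A (x^δ - x₀)‖ ≤ 2δ`, and sharpness turns this into `α ‖x^δ - x₀‖ ≤ 2δ`.
-/

section DescentCone

variable {E β : Type*} [AddCommGroup E] [Module ℝ E] [LE β]

def descentCone (J : E → β) (x₀ : E) : Set E :=
  {h | ∃ l > (0 : ℝ), ∃ x, J x ≤ J x₀ ∧ h = l • (x - x₀)}

theorem sub_mem_descentCone {J : E → β} {x x₀ : E} (hx : J x ≤ J x₀) :
    x - x₀ ∈ descentCone J x₀ :=
  ⟨1, one_pos, x, hx, (one_smul ℝ _).symm⟩

end DescentCone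

theorem norm_map_sub_le_add {E F 𝓕 : Type*} [AddCommGroup E] [SeminormedAddCommGroup F]
    [FunLike 𝓕 E F] [AddMonoidHomClass 𝓕 E F] (A : 𝓕) (x y : E) (b : F) :
    ‖A (x - y)‖ ≤ ‖A x - b‖ + ‖A y - b‖ := by
  rw [map_sub, ← sub_sub_sub_cancel_right (A x) (A y) b]
  exact norm_sub_le _ _

theorem robust_recovery_linear_rate_of_sharp_general
    (n m : ℕ) (J : EuclideanSpace ℝ (Fin n) → EReal)
    (A : EuclideanSpace ℝ (Fin n) →L[ℝ] EuclideanSpace ℝ (Fin m))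
    (x₀ : EuclideanSpace ℝ (Fin n))
    (α : ℝ) (hα : 0 < α)
    (hcone : ∀ h ∈ closure {hh | ∃ l > (0 : ℝ), ∃ x, J x ≤ J x₀ ∧ hh = l • (x - x₀)},
      α * ‖h‖ ≤ ‖A h‖)
    (δ : ℝ) (b : EuclideanSpace ℝ (Fin m)) (hb : ‖A x₀ - b‖ ≤ δ)
    (xδ : EuclideanSpace ℝ (Fin n)) (hfeas : ‖A xδ - b‖ ≤ δ)
    (hopt : ∀ x, ‖A x - b‖ ≤ δ → J xδ ≤ J x) :
    ‖xδ - x₀‖ ≤ 2 * δ / α := by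
  have hdescent : xδ - x₀ ∈ descentCone J x₀ := sub_mem_descentCone (hopt x₀ hb)
  have hsharp : α * ‖xδ - x₀‖ ≤ ‖A (xδ - x₀)‖ := hcone _ (subset_closure hdescent)
  have hdata : ‖A (xδ - x₀)‖ ≤ 2 * δ := by
    linarith [norm_map_sub_le_add A xδ x₀ b]
  rw [le_div_iff₀ hα]
  linarith

/-- Let `J` be lsc proper convex, `b₀ = A x₀`, and suppose there is
`α > 0` with `‖Ah‖ ≥ α‖h‖` for all `h ∈ cl D_J(x₀)` (x₀ is a sharp solution). Then for any
`δ > 0` and `b` with `‖Ax₀ - b‖ ≤ δ`, every minimizer `x^δ` of `J` over `{x : ‖Ax - b‖ ≤ δ}`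
satisfies `‖x^δ - x₀‖ ≤ 2δ/α`. -/
theorem robust_recovery_linear_rate_of_sharp
    (n m : ℕ) (J : EuclideanSpace ℝ (Fin n) → EReal)
    (hproper_bot : ∀ x, ⊥ < J x) (hproper_top : ∃ x, J x < ⊤)
    (hconvex : ∀ x y, ∀ a b : ℝ, 0 ≤ a → 0 ≤ b → a + b = 1 →
      J (a • x + b • y) ≤ (a : EReal) * J x + (b : EReal) * J y)
    (hlsc : LowerSemicontinuous J)
    (A : EuclideanSpace ℝ (Fin n) →L[ℝ] EuclideanSpace ℝ (Fin m))
    (x₀ : EuclideanSpace ℝ (Fin n)) (b₀ : EuclideanSpace ℝ (Fin m)) (hb₀ : b₀ = A x₀)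
    (α : ℝ) (hα : 0 < α)
    (hcone : ∀ h ∈ closure {hh | ∃ l > (0 : ℝ), ∃ x, J x ≤ J x₀ ∧ hh = l • (x - x₀)},
      α * ‖h‖ ≤ ‖A h‖)
    (δ : ℝ) (hδ : 0 < δ) (b : EuclideanSpace ℝ (Fin m)) (hb : ‖A x₀ - b‖ ≤ δ)
    (xδ : EuclideanSpace ℝ (Fin n)) (hfeas : ‖A xδ - b‖ ≤ δ)
    (hopt : ∀ x, ‖A x - b‖ ≤ δ → J xδ ≤ J x) :
    ‖xδ - x₀‖ ≤ 2 * δ / α :=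
  robust_recovery_linear_rate_of_sharp_general n m J A x₀ α hα hcone δ b hb xδ hfeas hopt
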